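/- Let $\beta > 1$ and $0 < k \le \varphi$. Then $\int_{k}^{\varphi} \left(\frac{1}{k^\beta} - \frac{1}{\mu^\beta}\right) d\mu \ge \frac{2\beta}{(\beta-1)^2} \left(\frac{1}{k^{(\beta-1)/2}} - \frac{1}{\varphi^{(\beta-1)/2}}\right)^2$. -/

import Mathlib

open Real intervalIntegral Set

private lemma bern {s c : ℝ} (hs : 1 ≤ s) (hc : 1 ≤ c) : 1 + c * (s - 1) ≤ s ^ c := by
  have := one_add_mul_self_le_rpow_one_add (by linarith : (-1:ℝ) ≤ s - 1) hc
  simpa using this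

private lemma deriv_bound (β k x : ℝ) (hβ : 1 < β) (hk : 0 < k) (hx : k ≤ x) :
    2 * β / (β - 1) * ((k ^ (-((β-1)/2)) - x ^ (-((β-1)/2))) * x ^ (-((β-1)/2) - 1))
      ≤ k ^ (-β) - x ^ (-β) := by
  have hx0 : 0 < x := lt_of_lt_of_le hk hx
  set γ := (β-1)/2 with hγ
  have hγ0 : 0 < γ := by rw [hγ]; linarith
  set s := (x/k) ^ γ with hsdef
  have hs : 1 ≤ s := Real.one_le_rpow ((one_le_div hk).2 hx) hγ0.le
  have hc : (1:ℝ) ≤ 2*β/(β-1) := by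
    rw [le_div_iff₀ (by linarith)]; linarith
  have hb := bern hs hc
  have h1 : k ^ (-γ) = x ^ (-γ) * s := by
    rw [hsdef, Real.div_rpow hx0.le hk.le, Real.rpow_neg hx0.le, Real.rpow_neg hk.le]
    have : (x:ℝ) ^ γ ≠ 0 := (Real.rpow_pos_of_pos hx0 _).ne'
    field_simp
  have hβ1 : β - 1 ≠ 0 := by linarith
  have hγc : γ * (2*β/(β-1)) = β := by
    rw [hγ]; field_simp
  have h2 : s ^ (2*β/(β-1)) = x ^ β * k ^ (-β) := by
    rw [hsdef, ← Real.rpow_mul (by positivity), hγc, Real.div_rpow hx0.le hk.le,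
        Real.rpow_neg hk.le, div_eq_mul_inv]
  have h3 : x ^ (-γ) * x ^ (-γ - 1) = x ^ (-β) := by
    rw [← Real.rpow_add hx0]; congr 1; rw [hγ]; ring
  have h4 : x ^ (-β) * (x ^ β) = 1 := by
    rw [← Real.rpow_add hx0]; simp
  have hxb : (0:ℝ) < x ^ (-β) := Real.rpow_pos_of_pos hx0 _
  have h5 : k ^ (-β) = x ^ (-β) * s ^ (2*β/(β-1)) := by
    rw [h2, ← mul_assoc, h4, one_mul]
  have key : 2*β/(β-1) * ((k^(-γ) - x^(-γ)) * x^(-γ-1))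
      = 2*β/(β-1) * (s-1) * (x^(-γ) * x^(-γ-1)) := by
    rw [h1]; ring
  rw [key, h3, h5]
  nlinarith [mul_le_mul_of_nonneg_right hb hxb.le]

private lemma alg (β k φ : ℝ) (hβ : 1 < β) (hk : 0 < k) (hkφ : k ≤ φ) :
    2 * β / (β - 1) ^ 2 * (k ^ (-((β-1)/2)) - φ ^ (-((β-1)/2))) ^ 2
      ≤ (φ - k) * k ^ (-β) - (φ ^ (-β + 1) - k ^ (-β + 1)) / (-β + 1) := by
  have hβ1 : β - 1 ≠ 0 := by linarith
  have hβ1' : -β + 1 ≠ 0 := by intro h; apply hβ1; linarith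
  set γ := (β-1)/2 with hγ
  set H : ℝ → ℝ := fun x => (x - k) * k ^ (-β) - (x ^ (-β+1) - k ^ (-β+1)) / (-β+1)
      - 2*β/(β-1)^2 * (k ^ (-γ) - x ^ (-γ))^2 with hH
  have hderiv : ∀ x ∈ Ici k, HasDerivAt H
      (k ^ (-β) - x ^ (-β)
        - 2*β/(β-1) * ((k ^ (-γ) - x ^ (-γ)) * x ^ (-γ-1))) x := by
    intro x hx
    have hx0 : 0 < x := lt_of_lt_of_le hk hx
    have d1 : HasDerivAt (fun x:ℝ => (x - k) * k ^ (-β)) (k ^ (-β)) x := by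
      simpa using ((hasDerivAt_id x).sub_const k).mul_const (k ^ (-β))
    have d2 : HasDerivAt (fun x:ℝ => (x ^ (-β+1) - k ^ (-β+1)) / (-β+1))
        (((-β+1) * x ^ (-β+1-1)) / (-β+1)) x :=
      ((Real.hasDerivAt_rpow_const (Or.inl hx0.ne')).sub_const _).div_const _
    have d3 : HasDerivAt (fun x:ℝ => k ^ (-γ) - x ^ (-γ)) (0 - (-γ) * x ^ (-γ-1)) x :=
      (hasDerivAt_const x _).sub (Real.hasDerivAt_rpow_const (Or.inl hx0.ne'))
    have d4 := (d3.pow 2).const_mul (2*β/(β-1)^2)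
    have := (d1.sub d2).sub d4
    convert this using 1
    · rfl
    · rfl
    · rfl
    rw [show -β+1-1 = -β by ring]
    have h2 : ((-β+1) * x ^ (-β)) / (-β+1) = x ^ (-β) := by
      field_simp
    rw [h2]
    norm_num
    rw [hγ]
    field_simp
  have mono : MonotoneOn H (Ici k) := by
    apply monotoneOn_of_deriv_nonneg (convex_Ici k)
    · exact fun x hx => (hderiv x hx).continuousAt.continuousWithinAt
    · intro x hx
      rw [interior_Ici] at hx
      exact (hderiv x (mem_Ici.2 (le_of_lt hx))).differentiableAt.differentiableWithinAt
    · intro x hx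
      rw [interior_Ici] at hx
      rw [(hderiv x (mem_Ici.2 hx.le)).deriv]
      have := deriv_bound β k x hβ hk hx.le
      rw [← hγ] at this
      linarith
  have h0 : H k = 0 := by simp [hH]
  have hfin : H k ≤ H φ := mono self_mem_Ici hkφ hkφ
  rw [h0, hH] at hfin
  linarith

theorem stmt_19 (β k φ : ℝ) (hβ : 1 < β) (hk : 0 < k) (hkφ : k ≤ φ) :
    (2 * β / (β - 1) ^ 2) * (1 / k ^ ((β - 1) / 2) - 1 / φ ^ ((β - 1) / 2)) ^ 2
      ≤ ∫ μ in k..φ, (1 / k ^ β - 1 / μ ^ β) := by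
  have hφ0 : 0 < φ := lt_of_lt_of_le hk hkφ
  have hβ1 : β - 1 ≠ 0 := by linarith
  have huIcc : Set.uIcc k φ = Icc k φ := uIcc_of_le hkφ
  have hnot : (0:ℝ) ∉ Set.uIcc k φ := by
    rw [huIcc]; intro h; exact absurd h.1 (not_le.2 hk)
  have hint : (∫ μ in k..φ, (1 / k ^ β - 1 / μ ^ β))
      = (φ - k) * k ^ (-β) - (φ ^ (-β + 1) - k ^ (-β + 1)) / (-β + 1) := by
    rw [intervalIntegral.integral_congr (g := fun μ => k ^ (-β) - μ ^ (-β)) ?_]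
    · rw [intervalIntegral.integral_sub intervalIntegrable_const
        (intervalIntegral.intervalIntegrable_rpow (Or.inr hnot)),
        intervalIntegral.integral_const,
        integral_rpow (Or.inr ⟨by intro h; apply hβ1; linarith [neg_injective h], hnot⟩)]
      simp [smul_eq_mul]
    · intro μ hμ
      rw [huIcc] at hμ
      have hμ0 : 0 < μ := lt_of_lt_of_le hk hμ.1
      simp only [Real.rpow_neg hk.le, Real.rpow_neg hμ0.le, one_div]
  rw [hint,
    show (1:ℝ)/k^((β-1)/2) = k^(-((β-1)/2)) by rw [Real.rpow_neg hk.le, one_div],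
    show (1:ℝ)/φ^((β-1)/2) = φ^(-((β-1)/2)) by rw [Real.rpow_neg hφ0.le, one_div]]
  exact alg β k φ hβ hk hkφ
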